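/- arXiv:1912.03987 — 3 statements merged into one kernel-verified Lean document; each statement's English description precedes it below -/
import Mathlib

section
/- Fix T > 0, δ ∈ (0,2), and a, b ≥ 0. Let v : ℝ × ℝⁿ × ℝⁿ → ℝⁿ be smooth with ‖v(t,q,p)‖ ≤ a + b‖p‖^(2-δ) for all arguments. Let q₀ ∈ ℝⁿ and u₀ ∈ ℝⁿ with u₀ ≠ 0, and let γ(t) be the straight-line solution of q'' = 0 with γ(0) = q₀, γ'(0) = u₀. Then for every ε > 0 there exists λ₀ > 0 such that for all λ ≥ λ₀, the solution q₁ of q'' = v(t, q, q') with q₁(0) = q₀, q₁'(0) = λ u₀ satisfies ‖q₁(t) − (q₀ + λ t u₀)‖ < ε for all t ∈ [0, T/λ]. -/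
open Set Filter Real

set_option maxHeartbeats 1000000

/-- Flat-metric case of the lemma: solutions of `q'' = v(t,q,q')` with large
initial speed `λ u₀` stay `ε`-close to the straight line `q₀ + λ t u₀` for
`t ∈ [0, T/λ]`, provided `v` is smooth with sub-quadratic growth in velocity. -/
theorem stmt_2 (n : ℕ)
    (T : ℝ) (hT : 0 < T) (δ : ℝ) (hδ : δ ∈ Set.Ioo (0:ℝ) 2)
    (a b : ℝ) (ha : 0 ≤ a) (hb : 0 ≤ b)
    (v : ℝ → EuclideanSpace ℝ (Fin n) → EuclideanSpace ℝ (Fin n) → EuclideanSpace ℝ (Fin n))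
    (hv_smooth : ContDiff ℝ (⊤ : ℕ∞) fun p : ℝ × EuclideanSpace ℝ (Fin n) × EuclideanSpace ℝ (Fin n) =>
      v p.1 p.2.1 p.2.2)
    (hv_growth : ∀ t q p, ‖v t q p‖ ≤ a + b * ‖p‖ ^ (2 - δ))
    (q₀ u₀ : EuclideanSpace ℝ (Fin n)) (hu₀ : u₀ ≠ 0) :
    ∀ ε > 0, ∃ Λ₀ > 0, ∀ lam ≥ Λ₀,
      ∀ q₁ : ℝ → EuclideanSpace ℝ (Fin n),
        ContDiff ℝ 2 q₁ →
        q₁ 0 = q₀ → deriv q₁ 0 = lam • u₀ →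
        (∀ t, deriv (deriv q₁) t = v t (q₁ t) (deriv q₁ t)) →
        ∀ t ∈ Set.Icc (0:ℝ) (T / lam), ‖q₁ t - (q₀ + (lam * t) • u₀)‖ < ε := by
  intro ε hε
  have hu : 0 < ‖u₀‖ := norm_pos_iff.mpr hu₀
  set K : ℝ → ℝ := fun l => a + b * (2 * l * ‖u₀‖) ^ (2 - δ) with hK
  -- K l / l ^ 2 → 0
  have key : Tendsto (fun l : ℝ => K l / l ^ 2) atTop (nhds 0) := by
    have heq : ∀ᶠ l : ℝ in atTop,
        a / l ^ 2 + (b * (2 * ‖u₀‖) ^ (2 - δ)) * l ^ (-δ) = K l / l ^ 2 := by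
      filter_upwards [eventually_gt_atTop (0:ℝ)] with l hl
      have h2u : (0:ℝ) ≤ 2 * ‖u₀‖ := by positivity
      have : (2 * l * ‖u₀‖) ^ (2 - δ) = (2 * ‖u₀‖) ^ (2 - δ) * l ^ (2 - δ) := by
        rw [show 2 * l * ‖u₀‖ = (2 * ‖u₀‖) * l by ring, Real.mul_rpow h2u hl.le]
      rw [hK]
      simp only [this]
      have hpow : l ^ (-δ) = l ^ (2 - δ) / l ^ 2 := by
        rw [show l ^ (2:ℕ) = l ^ ((2:ℕ):ℝ) from (Real.rpow_natCast l 2).symm,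
          ← Real.rpow_sub hl]
        norm_num
      rw [hpow]
      field_simp
    refine Tendsto.congr' heq ?_
    have h1 : Tendsto (fun l : ℝ => a / l ^ 2) atTop (nhds 0) :=
      Tendsto.div_atTop tendsto_const_nhds (tendsto_pow_atTop two_ne_zero)
    have h2 : Tendsto (fun l : ℝ => (b * (2 * ‖u₀‖) ^ (2 - δ)) * l ^ (-δ)) atTop (nhds 0) := by
      simpa using (tendsto_rpow_neg_atTop hδ.1).const_mul (b * (2 * ‖u₀‖) ^ (2 - δ))
    simpa using h1.add h2
  have hmin : (0:ℝ) < min (‖u₀‖ / T) (ε / T ^ 2) := by positivity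
  obtain ⟨N, hN⟩ := eventually_atTop.1 (key.eventually_lt_const hmin)
  refine ⟨max N 1, lt_of_lt_of_le one_pos (le_max_right _ _), ?_⟩
  intro lam hlam q₁ hq₁ hq₁0 hq₁'0 hODE t ht
  have hlam1 : (1:ℝ) ≤ lam := le_trans (le_max_right _ _) hlam
  have hlam0 : (0:ℝ) < lam := lt_of_lt_of_le one_pos hlam1
  have hKl := hN lam (le_trans (le_max_left _ _) hlam)
  have hl2 : (0:ℝ) < lam ^ 2 := by positivity
  -- the two numeric conditions
  have hC1 : K lam * T < lam ^ 2 * ‖u₀‖ := by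
    have h := lt_of_lt_of_le hKl (min_le_left _ _)
    rw [div_lt_div_iff₀ hl2 hT] at h
    linarith
  have hC2 : K lam * T ^ 2 < ε * lam ^ 2 := by
    have h := lt_of_lt_of_le hKl (min_le_right _ _)
    rw [div_lt_div_iff₀ hl2 (by positivity : (0:ℝ) < T ^ 2)] at h
    linarith
  have hK0 : 0 ≤ K lam := by
    have : (0:ℝ) ≤ (2 * lam * ‖u₀‖) ^ (2 - δ) := Real.rpow_nonneg (by positivity) _
    rw [hK]; dsimp only; nlinarith
  set c : ℝ := T / lam with hc
  have hc0 : 0 < c := div_pos hT hlam0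
  set w : ℝ → EuclideanSpace ℝ (Fin n) := deriv q₁ with hw
  -- differentiability facts
  have hq₁d : Differentiable ℝ q₁ := hq₁.differentiable (by norm_num)
  have hwC : ContDiff ℝ 1 w := by
    have := (contDiff_succ_iff_deriv.mp (show ContDiff ℝ (1 + 1) q₁ by exact_mod_cast hq₁)).2.2
    exact this
  have hwd : Differentiable ℝ w := hwC.differentiable one_ne_zero
  have hwderiv : ∀ s, HasDerivAt w (v s (q₁ s) (w s)) s := by
    intro s
    have := (hwd s).hasDerivAt
    rwa [show deriv w s = v s (q₁ s) (w s) from hODE s] at this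
  set R : ℝ := 2 * lam * ‖u₀‖ with hR
  have hw0 : w 0 = lam • u₀ := hq₁'0
  have hw0n : ‖w 0‖ = lam * ‖u₀‖ := by
    rw [hw0, norm_smul, Real.norm_eq_abs, abs_of_pos hlam0]
  -- acceleration bound whenever speed < R
  have haccel : ∀ s, ‖w s‖ ≤ R → ‖v s (q₁ s) (w s)‖ ≤ K lam := by
    intro s hs
    refine le_trans (hv_growth s (q₁ s) (w s)) ?_
    have : ‖w s‖ ^ (2 - δ) ≤ R ^ (2 - δ) :=
      Real.rpow_le_rpow (norm_nonneg _) hs (by linarith [hδ.2])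
    rw [hK]; dsimp only
    nlinarith
  -- velocity stays below R on [0, c]
  have hvel : ∀ s ∈ Icc (0:ℝ) c, ‖w s‖ < R := by
    by_contra hcon
    push_neg at hcon
    obtain ⟨t₀, ht₀, ht₀R⟩ := hcon
    set Sbad : Set ℝ := {s | s ∈ Icc (0:ℝ) c ∧ R ≤ ‖w s‖} with hSbad
    have hSne : Sbad.Nonempty := ⟨t₀, ht₀, ht₀R⟩
    have hScl : IsClosed Sbad := by
      have : Sbad = Icc (0:ℝ) c ∩ {s | R ≤ ‖w s‖} := rfl
      rw [this]
      exact isClosed_Icc.inter (isClosed_le continuous_const (hwd.continuous.norm))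
    have hSbdd : BddBelow Sbad := ⟨0, fun s hs => hs.1.1⟩
    set τ : ℝ := sInf Sbad with hτ
    have hτmem : τ ∈ Sbad := hScl.csInf_mem hSne hSbdd
    have hτIcc : τ ∈ Icc (0:ℝ) c := hτmem.1
    -- speed < R on [0, τ)
    have hlt : ∀ s ∈ Ico (0:ℝ) τ, ‖w s‖ < R := by
      intro s hs
      by_contra h
      push_neg at h
      have : s ∈ Sbad := ⟨⟨hs.1, le_trans hs.2.le hτIcc.2⟩, h⟩
      exact absurd (csInf_le hSbdd this) (not_le.mpr hs.2)
    -- mean value on [0, τ]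
    have hmv := norm_image_sub_le_of_norm_deriv_le_segment'
      (f := w) (f' := fun s => v s (q₁ s) (w s)) (a := 0) (b := τ) (C := K lam)
      (fun x _ => (hwderiv x).hasDerivWithinAt)
      (fun x hx => haccel x (hlt x hx).le) τ (right_mem_Icc.mpr hτIcc.1)
    have hbound : ‖w τ‖ < R := by
      have h1 : ‖w τ‖ ≤ ‖w 0‖ + K lam * τ := by
        calc ‖w τ‖ ≤ ‖w 0‖ + ‖w τ - w 0‖ := by
              have := norm_sub_norm_le (w τ) (w 0); linarith [norm_sub_rev (w τ) (w 0) ▸ this]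
          _ ≤ ‖w 0‖ + K lam * τ := by
              have := hmv; simp only [sub_zero] at this; linarith
      have h2 : K lam * τ ≤ K lam * c := mul_le_mul_of_nonneg_left hτIcc.2 hK0
      have h3 : K lam * c < lam * ‖u₀‖ := by
        rw [hc, mul_div_assoc']
        rw [div_lt_iff₀ hlam0]
        have : lam ^ 2 = lam * lam := pow_two lam
        nlinarith
      rw [hw0n] at h1
      rw [hR]; linarith
    exact absurd hτmem.2 (not_le.mpr hbound)
  -- velocity deviation bound on [0, c]
  have hvdev : ∀ s ∈ Icc (0:ℝ) c, ‖w s - w 0‖ ≤ K lam * s := by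
    intro s hs
    have := norm_image_sub_le_of_norm_deriv_le_segment'
      (f := w) (f' := fun s => v s (q₁ s) (w s)) (a := 0) (b := c) (C := K lam)
      (fun x _ => (hwderiv x).hasDerivWithinAt)
      (fun x hx => haccel x (hvel x (Ico_subset_Icc_self hx)).le) s hs
    simpa using this
  -- displacement bound
  set g : ℝ → EuclideanSpace ℝ (Fin n) := fun s => q₁ s - s • (lam • u₀) with hg
  have hgderiv : ∀ s, HasDerivAt g (w s - lam • u₀) s := by
    intro s
    have h1 : HasDerivAt (fun s : ℝ => s • (lam • u₀)) ((1:ℝ) • (lam • u₀)) s :=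
      (hasDerivAt_id s).smul_const (lam • u₀)
    rw [one_smul] at h1
    exact ((hq₁d s).hasDerivAt).sub h1
  have hgmv := norm_image_sub_le_of_norm_deriv_le_segment'
    (f := g) (f' := fun s => w s - lam • u₀) (a := 0) (b := c) (C := K lam * c)
    (fun x _ => (hgderiv x).hasDerivWithinAt)
    (fun x hx => by
      have := hvdev x (Ico_subset_Icc_self hx)
      rw [hw0] at this
      exact le_trans this (mul_le_mul_of_nonneg_left hx.2.le hK0))
    t ht
  have hg0 : g 0 = q₀ := by rw [hg]; simp [hq₁0]
  have hgt : g t - g 0 = q₁ t - (q₀ + (lam * t) • u₀) := by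
    rw [hg0]; simp only [hg]
    rw [show (lam * t) • u₀ = t • (lam • u₀) by rw [smul_smul, mul_comm]]
    abel
  rw [hgt] at hgmv
  simp only [sub_zero] at hgmv
  have hfin : K lam * c * t ≤ K lam * c * c :=
    mul_le_mul_of_nonneg_left ht.2 (mul_nonneg hK0 hc0.le)
  have hcc : K lam * c * c < ε := by
    rw [hc]
    rw [show K lam * (T / lam) * (T / lam) = K lam * T ^ 2 / lam ^ 2 by field_simp]
    rw [div_lt_iff₀ hl2]
    linarith
  linarith
end

section
/- Let f : ℝ → ℝ be continuous, 2π-periodic, and bounded. Then the equation q̈ = f(t)·sin q − cos q has a 2π-periodic solution q(t) with q(t) ∈ (0, π) for all t. -/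
/-!
Write the equation as `q'' - μ² q = F(t, q)` with `F(t, r) = f t sin r - cos r - μ² r` and
`μ² ≥ sup |f| + 1`, so that `F` is antitone in `r`. The inverse of `d²/dt² - μ²` on bounded
functions is convolution with the negative kernel `-e^{-μ|t|}/(2μ)`, hence antitone, and it sends
a constant `c` to `-c/μ²`. So `T q = (d²/dt² - μ²)⁻¹ F(·, q)` is monotone on functions with
values in `[0, π]`, and the barrier values `F(t, 0) = -1`, `F(t, π) = 1 - μ² π` put `T q` in
`[1/μ², π - 1/μ²]`. Hence the iterates of `T` from the constant `π` decrease; by dominated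
convergence their limit is a fixed point, `2π`-periodic since `T` commutes with translations.
-/

open MeasureTheory Real Set Filter Function
open scoped Topology ENNReal

section Primitives

variable {g : ℝ → ℝ}

theorem integral_Iic_eq_add_intervalIntegral (hg : ∀ a, IntegrableOn g (Iic a)) (t : ℝ) :
    ∫ s in Iic t, g s = (∫ s in Iic 0, g s) + ∫ s in 0..t, g s :=
  eq_add_of_sub_eq' (intervalIntegral.integral_Iic_sub_Iic (hg 0) (hg t))

theorem integral_Ioi_eq_sub_intervalIntegral (hg : ∀ a, IntegrableOn g (Ioi a)) (t : ℝ) :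
    ∫ s in Ioi t, g s = (∫ s in Ioi 0, g s) - ∫ s in 0..t, g s :=
  eq_sub_of_add_eq (add_eq_of_eq_sub' (intervalIntegral.integral_Ioi_sub_Ioi' (hg 0) (hg t)).symm)

theorem intervalIntegrable_of_forall_integrableOn_Iic (hg : ∀ a, IntegrableOn g (Iic a))
    (a b : ℝ) : IntervalIntegrable g volume a b :=
  ((hg (max a b)).mono_set fun _ hx => hx.2).intervalIntegrable

theorem intervalIntegrable_of_forall_integrableOn_Ioi (hg : ∀ a, IntegrableOn g (Ioi a))
    (a b : ℝ) : IntervalIntegrable g volume a b :=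
  ((hg (min a b - 1)).mono_set fun _ hx => (sub_one_lt _).trans_le hx.1).intervalIntegrable

theorem continuous_integral_Iic (hg : ∀ a, IntegrableOn g (Iic a)) :
    Continuous fun t => ∫ s in Iic t, g s := by
  rw [funext (integral_Iic_eq_add_intervalIntegral hg)]
  exact continuous_const.add
    (intervalIntegral.continuous_primitive (intervalIntegrable_of_forall_integrableOn_Iic hg) 0)

theorem continuous_integral_Ioi (hg : ∀ a, IntegrableOn g (Ioi a)) :
    Continuous fun t => ∫ s in Ioi t, g s := by
  rw [funext (integral_Ioi_eq_sub_intervalIntegral hg)]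
  exact continuous_const.sub
    (intervalIntegral.continuous_primitive (intervalIntegrable_of_forall_integrableOn_Ioi hg) 0)

theorem hasDerivAt_integral_Iic (hg : ∀ a, IntegrableOn g (Iic a)) {t : ℝ}
    (hgt : ContinuousAt g t) : HasDerivAt (fun u => ∫ s in Iic u, g s) (g t) t := by
  rw [funext (integral_Iic_eq_add_intervalIntegral hg)]
  refine (intervalIntegral.integral_hasDerivAt_right
    (intervalIntegrable_of_forall_integrableOn_Iic hg 0 t) ?_ hgt).const_add _
  exact ⟨Iio (t + 1), Iio_mem_nhds (lt_add_one t),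
    ((hg (t + 1)).mono_set Iio_subset_Iic_self).aestronglyMeasurable⟩

theorem hasDerivAt_integral_Ioi (hg : ∀ a, IntegrableOn g (Ioi a)) {t : ℝ}
    (hgt : ContinuousAt g t) : HasDerivAt (fun u => ∫ s in Ioi u, g s) (-g t) t := by
  rw [funext (integral_Ioi_eq_sub_intervalIntegral hg)]
  refine (intervalIntegral.integral_hasDerivAt_right
    (intervalIntegrable_of_forall_integrableOn_Ioi hg 0 t) ?_ hgt).const_sub _
  exact ⟨Ioi (t - 1), Ioi_mem_nhds (sub_one_lt t), (hg (t - 1)).aestronglyMeasurable⟩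

end Primitives

theorem contDiff_two_of_hasDerivAt {u u' u'' : ℝ → ℝ} (hu : ∀ t, HasDerivAt u (u' t) t)
    (hu' : ∀ t, HasDerivAt u' (u'' t) t) (hu'' : Continuous u'') : ContDiff ℝ 2 u := by
  have hderiv : deriv u = u' := funext fun t => (hu t).deriv
  have hderiv' : deriv u' = u'' := funext fun t => (hu' t).deriv
  rw [show (2 : WithTop ℕ∞) = 1 + 1 from rfl, contDiff_succ_iff_deriv, hderiv,
    contDiff_one_iff_deriv, hderiv']
  exact ⟨fun t => (hu t).differentiableAt, by simp, fun t => (hu' t).differentiableAt, hu''⟩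

noncomputable def greenOp (μ : ℝ) (h : ℝ → ℝ) (t : ℝ) : ℝ :=
  -(1 / (2 * μ)) * ∫ s, exp (-μ * |t - s|) * h s

/- `greenOp` split at `s = t`: each half solves a first-order linear equation, which is how its
derivatives are computed. -/
noncomputable def greenLeft (μ : ℝ) (h : ℝ → ℝ) (t : ℝ) : ℝ :=
  exp (-μ * t) * ∫ s in Iic t, exp (μ * s) * h s

noncomputable def greenRight (μ : ℝ) (h : ℝ → ℝ) (t : ℝ) : ℝ :=
  exp (μ * t) * ∫ s in Ioi t, exp (-μ * s) * h s

section GreenOperator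

variable {μ : ℝ} {h : ℝ → ℝ}

theorem exp_neg_mul_mul_exp_mul (μ t : ℝ) : exp (-μ * t) * exp (μ * t) = 1 := by
  rw [← exp_add, neg_mul, neg_add_cancel, exp_zero]

theorem integrableOn_Iic_exp_mul_mul (hμ : 0 < μ) (hh : MemLp h ∞) (a : ℝ) :
    IntegrableOn (fun s => exp (μ * s) * h s) (Iic a) :=
  (integrableOn_exp_mul_Iic hμ a).mul_of_top_left (hh.restrict _)

theorem integrableOn_Ioi_exp_neg_mul_mul (hμ : 0 < μ) (hh : MemLp h ∞) (a : ℝ) :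
    IntegrableOn (fun s => exp (-μ * s) * h s) (Ioi a) :=
  (integrableOn_exp_mul_Ioi (neg_neg_of_pos hμ) a).mul_of_top_left (hh.restrict _)

theorem exp_neg_mul_abs_sub_of_le {t s : ℝ} (hst : s ≤ t) :
    exp (-μ * |t - s|) = exp (-μ * t) * exp (μ * s) := by
  rw [abs_of_nonneg (sub_nonneg.2 hst), ← exp_add]; ring_nf

theorem exp_neg_mul_abs_sub_of_lt {t s : ℝ} (hts : t < s) :
    exp (-μ * |t - s|) = exp (μ * t) * exp (-μ * s) := by
  rw [abs_of_neg (sub_neg.2 hts), ← exp_add]; ring_nf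

theorem integrable_exp_neg_mul_abs_sub_mul (hμ : 0 < μ) (hh : MemLp h ∞) (t : ℝ) :
    Integrable fun s => exp (-μ * |t - s|) * h s := by
  have hleft : IntegrableOn (fun s => exp (-μ * |t - s|) * h s) (Iic t) :=
    IntegrableOn.congr_fun ((integrableOn_Iic_exp_mul_mul hμ hh t).const_mul (exp (-μ * t)))
      (fun s hs => by rw [exp_neg_mul_abs_sub_of_le hs, mul_assoc]) measurableSet_Iic
  have hright : IntegrableOn (fun s => exp (-μ * |t - s|) * h s) (Ioi t) :=
    IntegrableOn.congr_fun ((integrableOn_Ioi_exp_neg_mul_mul hμ hh t).const_mul (exp (μ * t)))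
      (fun s hs => by rw [exp_neg_mul_abs_sub_of_lt hs, mul_assoc]) measurableSet_Ioi
  rw [← integrableOn_univ, ← Iic_union_Ioi (a := t)]
  exact hleft.union hright

theorem greenOp_eq (hμ : 0 < μ) (hh : MemLp h ∞) (t : ℝ) :
    greenOp μ h t = -(greenLeft μ h t + greenRight μ h t) / (2 * μ) := by
  have hint := integrable_exp_neg_mul_abs_sub_mul hμ hh t
  rw [greenOp, ← intervalIntegral.integral_Iic_add_Ioi hint.integrableOn hint.integrableOn,
    greenLeft, greenRight, ← integral_const_mul, ← integral_const_mul,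
    setIntegral_congr_fun measurableSet_Iic fun s hs => by
      rw [exp_neg_mul_abs_sub_of_le hs, mul_assoc],
    setIntegral_congr_fun measurableSet_Ioi fun s hs => by
      rw [exp_neg_mul_abs_sub_of_lt hs, mul_assoc]]
  ring

theorem greenOp_const (hμ : 0 < μ) (c t : ℝ) : greenOp μ (fun _ => c) t = -c / μ ^ 2 := by
  rw [greenOp_eq hμ (memLp_top_const c), greenLeft, greenRight, integral_mul_const,
    integral_mul_const, integral_exp_mul_Iic hμ, integral_exp_mul_Ioi (neg_neg_of_pos hμ)]
  have hexp := exp_neg_mul_mul_exp_mul μ t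
  field_simp
  simp only [neg_mul] at hexp ⊢
  linear_combination (-2 * c) * hexp

theorem greenOp_anti (hμ : 0 < μ) {h₁ h₂ : ℝ → ℝ} (hh₁ : MemLp h₁ ∞) (hh₂ : MemLp h₂ ∞)
    (h₁₂ : h₁ ≤ h₂) : greenOp μ h₂ ≤ greenOp μ h₁ := fun t => by
  have hint : ∫ s, exp (-μ * |t - s|) * h₁ s ≤ ∫ s, exp (-μ * |t - s|) * h₂ s :=
    integral_mono (integrable_exp_neg_mul_abs_sub_mul hμ hh₁ t)
      (integrable_exp_neg_mul_abs_sub_mul hμ hh₂ t)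
      fun s => mul_le_mul_of_nonneg_left (h₁₂ s) (exp_pos _).le
  exact mul_le_mul_of_nonpos_left hint (by simp only [neg_nonpos]; positivity)

theorem greenOp_periodic {P : ℝ} (hP : Periodic h P) : Periodic (greenOp μ h) P := fun t => by
  rw [greenOp, greenOp, ← integral_add_right_eq_self _ P]
  simp only [hP _, show ∀ s, t + P - (s + P) = t - s from fun s => by ring]

theorem continuous_greenOp (hμ : 0 < μ) (hh : MemLp h ∞) : Continuous (greenOp μ h) := by
  rw [funext (greenOp_eq hμ hh)]
  have hL := continuous_integral_Iic (integrableOn_Iic_exp_mul_mul hμ hh)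
  have hR := continuous_integral_Ioi (integrableOn_Ioi_exp_neg_mul_mul hμ hh)
  unfold greenLeft greenRight
  fun_prop

theorem hasDerivAt_greenLeft (hμ : 0 < μ) (hh : MemLp h ∞) (hc : Continuous h) (t : ℝ) :
    HasDerivAt (greenLeft μ h) (-μ * greenLeft μ h t + h t) t := by
  have hA := hasDerivAt_integral_Iic (integrableOn_Iic_exp_mul_mul hμ hh)
    (t := t) (by fun_prop)
  refine (((hasDerivAt_id' t).const_mul (-μ)).exp.mul hA).congr_deriv ?_
  rw [greenLeft]
  linear_combination h t * exp_neg_mul_mul_exp_mul μ t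

theorem hasDerivAt_greenRight (hμ : 0 < μ) (hh : MemLp h ∞) (hc : Continuous h) (t : ℝ) :
    HasDerivAt (greenRight μ h) (μ * greenRight μ h t - h t) t := by
  have hB := hasDerivAt_integral_Ioi (integrableOn_Ioi_exp_neg_mul_mul hμ hh)
    (t := t) (by fun_prop)
  refine (((hasDerivAt_id' t).const_mul μ).exp.mul hB).congr_deriv ?_
  rw [greenRight]
  linear_combination -h t * exp_neg_mul_mul_exp_mul μ t

theorem hasDerivAt_greenOp (hμ : 0 < μ) (hh : MemLp h ∞) (hc : Continuous h) (t : ℝ) :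
    HasDerivAt (greenOp μ h) ((greenLeft μ h t - greenRight μ h t) / 2) t := by
  rw [funext (greenOp_eq hμ hh)]
  refine (((hasDerivAt_greenLeft hμ hh hc t).add
    (hasDerivAt_greenRight hμ hh hc t)).neg.div_const (2 * μ)).congr_deriv ?_
  field_simp
  ring

theorem hasDerivAt_greenOp_deriv (hμ : 0 < μ) (hh : MemLp h ∞) (hc : Continuous h) (t : ℝ) :
    HasDerivAt (fun t => (greenLeft μ h t - greenRight μ h t) / 2)
      (μ ^ 2 * greenOp μ h t + h t) t := by
  refine (((hasDerivAt_greenLeft hμ hh hc t).sub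
    (hasDerivAt_greenRight hμ hh hc t)).div_const 2).congr_deriv ?_
  rw [greenOp_eq hμ hh]
  field_simp
  ring

theorem contDiff_greenOp (hμ : 0 < μ) (hh : MemLp h ∞) (hc : Continuous h) :
    ContDiff ℝ 2 (greenOp μ h) :=
  contDiff_two_of_hasDerivAt (hasDerivAt_greenOp hμ hh hc) (hasDerivAt_greenOp_deriv hμ hh hc)
    (by have := continuous_greenOp hμ hh; fun_prop)

theorem deriv_deriv_greenOp (hμ : 0 < μ) (hh : MemLp h ∞) (hc : Continuous h) (t : ℝ) :
    deriv (deriv (greenOp μ h)) t = μ ^ 2 * greenOp μ h t + h t := by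
  rw [funext fun t => (hasDerivAt_greenOp hμ hh hc t).deriv]
  exact (hasDerivAt_greenOp_deriv hμ hh hc t).deriv

theorem tendsto_greenOp (hμ : 0 < μ) {H : ℕ → ℝ → ℝ} {M : ℝ}
    (hH : ∀ n, AEStronglyMeasurable (H n)) (hbound : ∀ n s, |H n s| ≤ M)
    (hlim : ∀ s, Tendsto (fun n => H n s) atTop (𝓝 (h s))) (t : ℝ) :
    Tendsto (fun n => greenOp μ (H n) t) atTop (𝓝 (greenOp μ h t)) := by
  refine Tendsto.const_mul _ (tendsto_integral_of_dominated_convergence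
    (fun s => exp (-μ * |t - s|) * M) (fun n => ?_)
    (integrable_exp_neg_mul_abs_sub_mul hμ (memLp_top_const M) t) (fun n => ?_) ?_)
  · exact (Continuous.aestronglyMeasurable (by fun_prop)).mul (hH n)
  · exact ae_of_all _ fun s => by
      rw [norm_mul, norm_of_nonneg (exp_pos _).le]
      exact mul_le_mul_of_nonneg_left (hbound n s) (exp_pos _).le
  · exact ae_of_all _ fun s => (hlim s).const_mul _

end GreenOperator

theorem antitone_sub_mul_of_abs_sub_le {g : ℝ → ℝ} {L c : ℝ}
    (hg : ∀ a b, |g a - g b| ≤ L * |a - b|) (hLc : L ≤ c) : Antitone fun r => g r - c * r := by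
  intro a b hab
  have hgab := (abs_le.1 (hg b a)).2
  rw [abs_of_nonneg (sub_nonneg.2 hab)] at hgab
  nlinarith

noncomputable def shiftedForce (f : ℝ → ℝ) (μ s r : ℝ) : ℝ := f s * sin r - cos r - μ ^ 2 * r

noncomputable def pendulumStep (f : ℝ → ℝ) (μ : ℝ) (w : ℝ → ℝ) : ℝ → ℝ :=
  greenOp μ fun s => shiftedForce f μ s (w s)

noncomputable def pendulumIterate (f : ℝ → ℝ) (μ : ℝ) (n : ℕ) : ℝ → ℝ :=
  (pendulumStep f μ)^[n] fun _ => π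

theorem pendulumIterate_succ (f : ℝ → ℝ) (μ : ℝ) (n : ℕ) :
    pendulumIterate f μ (n + 1) = pendulumStep f μ (pendulumIterate f μ n) :=
  iterate_succ_apply' _ _ _

section Pendulum

variable {f : ℝ → ℝ} {C μ : ℝ}

theorem shiftedForce_antitone (hC : ∀ s, |f s| ≤ C) (hCμ : C + 1 ≤ μ ^ 2) (s : ℝ) :
    Antitone (shiftedForce f μ s) := by
  refine antitone_sub_mul_of_abs_sub_le (L := C + 1) (fun a b => ?_) hCμ
  calc |f s * sin a - cos a - (f s * sin b - cos b)|
      = |f s * (sin a - sin b) - (cos a - cos b)| := by ring_nf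
    _ ≤ |f s| * |sin a - sin b| + |cos a - cos b| := by
      rw [← abs_mul]; exact abs_sub _ _
    _ ≤ C * |a - b| + |a - b| :=
      add_le_add (mul_le_mul (hC s) (abs_sin_sub_sin_le a b) (abs_nonneg _)
        ((abs_nonneg _).trans (hC s))) (abs_cos_sub_cos_le a b)
    _ = (C + 1) * |a - b| := by ring

theorem abs_shiftedForce_le (hC : ∀ s, |f s| ≤ C) {s r : ℝ} (hr : r ∈ Icc 0 π) :
    |shiftedForce f μ s r| ≤ C + 1 + μ ^ 2 * π := by
  have hsin : |f s * sin r| ≤ C := by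
    rw [abs_mul]
    exact (mul_le_of_le_one_right (abs_nonneg _) (abs_sin_le_one r)).trans (hC s)
  have hr' : |μ ^ 2 * r| ≤ μ ^ 2 * π := by
    rw [abs_of_nonneg (by have := hr.1; positivity)]
    exact mul_le_mul_of_nonneg_left hr.2 (sq_nonneg μ)
  have hcos := abs_cos_le_one r
  rw [shiftedForce, abs_le] at *
  constructor <;> linarith

theorem memLp_shiftedForce (hf : Continuous f) (hC : ∀ s, |f s| ≤ C) {w : ℝ → ℝ}
    (hw : AEStronglyMeasurable w) (hwπ : ∀ t, w t ∈ Icc 0 π) :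
    MemLp (fun s => shiftedForce f μ s (w s)) ∞ := by
  refine memLp_top_of_bound ?_ (C + 1 + μ ^ 2 * π)
    (ae_of_all _ fun s => abs_shiftedForce_le hC (hwπ s))
  exact ((hf.aestronglyMeasurable.mul (continuous_sin.comp_aestronglyMeasurable hw)).sub
    (continuous_cos.comp_aestronglyMeasurable hw)).sub (hw.const_mul _)

theorem pendulumStep_mem_Icc (hμ : 0 < μ) (hf : Continuous f) (hC : ∀ s, |f s| ≤ C)
    (hCμ : C + 1 ≤ μ ^ 2) {w : ℝ → ℝ} (hw : AEStronglyMeasurable w)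
    (hwπ : ∀ t, w t ∈ Icc 0 π) (t : ℝ) :
    pendulumStep f μ w t ∈ Icc (1 / μ ^ 2) (π - 1 / μ ^ 2) := by
  have hF := memLp_shiftedForce (μ := μ) hf hC hw hwπ
  have hlow := greenOp_anti hμ hF (memLp_top_const (-1)) (fun s => by
    simpa [shiftedForce] using shiftedForce_antitone hC hCμ s (hwπ s).1) t
  have hupp := greenOp_anti hμ (memLp_top_const (1 - μ ^ 2 * π)) hF (fun s => by
    simpa [shiftedForce] using shiftedForce_antitone hC hCμ s (hwπ s).2) t
  rw [greenOp_const hμ] at hlow hupp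
  constructor
  · calc 1 / μ ^ 2 = -(-1) / μ ^ 2 := by ring
      _ ≤ pendulumStep f μ w t := hlow
  · calc pendulumStep f μ w t ≤ -(1 - μ ^ 2 * π) / μ ^ 2 := hupp
      _ = π - 1 / μ ^ 2 := by field_simp; ring

theorem pendulumStep_mono (hμ : 0 < μ) (hf : Continuous f) (hC : ∀ s, |f s| ≤ C)
    (hCμ : C + 1 ≤ μ ^ 2) {w₁ w₂ : ℝ → ℝ} (hw₁ : AEStronglyMeasurable w₁)
    (hw₁π : ∀ t, w₁ t ∈ Icc 0 π) (hw₂ : AEStronglyMeasurable w₂) (hw₂π : ∀ t, w₂ t ∈ Icc 0 π)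
    (hw₁₂ : w₁ ≤ w₂) : pendulumStep f μ w₁ ≤ pendulumStep f μ w₂ :=
  greenOp_anti hμ (memLp_shiftedForce hf hC hw₂ hw₂π) (memLp_shiftedForce hf hC hw₁ hw₁π)
    fun s => shiftedForce_antitone hC hCμ s (hw₁₂ s)

theorem pendulumStep_periodic {P : ℝ} (hfP : Periodic f P) {w : ℝ → ℝ} (hwP : Periodic w P) :
    Periodic (pendulumStep f μ w) P :=
  greenOp_periodic fun s => by simp only [shiftedForce, hfP s, hwP s]

theorem continuous_pendulumStep (hμ : 0 < μ) (hf : Continuous f) (hC : ∀ s, |f s| ≤ C)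
    {w : ℝ → ℝ} (hw : AEStronglyMeasurable w) (hwπ : ∀ t, w t ∈ Icc 0 π) :
    Continuous (pendulumStep f μ w) :=
  continuous_greenOp hμ (memLp_shiftedForce hf hC hw hwπ)

theorem pendulum_ode_of_pendulumStep_eq (hμ : 0 < μ) (hf : Continuous f) (hC : ∀ s, |f s| ≤ C)
    {q : ℝ → ℝ} (hq : AEStronglyMeasurable q) (hqπ : ∀ t, q t ∈ Icc 0 π)
    (hfix : pendulumStep f μ q = q) :
    ContDiff ℝ 2 q ∧ ∀ t, deriv (deriv q) t = f t * sin (q t) - cos (q t) := by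
  have hF := memLp_shiftedForce (μ := μ) hf hC hq hqπ
  have hqc : Continuous q := hfix ▸ continuous_pendulumStep hμ hf hC hq hqπ
  have hFc : Continuous fun s => shiftedForce f μ s (q s) := by unfold shiftedForce; fun_prop
  refine ⟨hfix ▸ contDiff_greenOp hμ hF hFc, fun t => ?_⟩
  have hq'' : deriv (deriv (pendulumStep f μ q)) t =
      μ ^ 2 * pendulumStep f μ q t + shiftedForce f μ t (q t) :=
    deriv_deriv_greenOp hμ hF hFc t
  rw [hfix, shiftedForce] at hq''
  rw [hq'']
  ring

theorem pendulumIterate_mem (hμ : 0 < μ) (hf : Continuous f) (hC : ∀ s, |f s| ≤ C)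
    (hCμ : C + 1 ≤ μ ^ 2) (n : ℕ) :
    AEStronglyMeasurable (pendulumIterate f μ n) ∧ ∀ t, pendulumIterate f μ n t ∈ Icc 0 π := by
  induction n with
  | zero => exact ⟨aestronglyMeasurable_const, fun _ => ⟨pi_pos.le, le_rfl⟩⟩
  | succ n ih =>
    rw [pendulumIterate_succ]
    refine ⟨(continuous_pendulumStep hμ hf hC ih.1 ih.2).aestronglyMeasurable, fun t => ?_⟩
    have hstep := pendulumStep_mem_Icc hμ hf hC hCμ ih.1 ih.2 t
    have hμ2 : 0 < 1 / μ ^ 2 := by positivity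
    exact ⟨hμ2.le.trans hstep.1, hstep.2.trans (by linarith)⟩

theorem pendulumIterate_succ_le (hμ : 0 < μ) (hf : Continuous f) (hC : ∀ s, |f s| ≤ C)
    (hCμ : C + 1 ≤ μ ^ 2) (n : ℕ) : pendulumIterate f μ (n + 1) ≤ pendulumIterate f μ n := by
  have hmem := pendulumIterate_mem hμ hf hC hCμ
  induction n with
  | zero =>
    intro t
    have hμ2 : 0 < 1 / μ ^ 2 := by positivity
    have hπ := (pendulumStep_mem_Icc hμ hf hC hCμ (hmem 0).1 (hmem 0).2 t).2
    exact hπ.trans (by rw [pendulumIterate]; simp only [iterate_zero, id_eq]; linarith)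
  | succ n ih =>
    rw [pendulumIterate_succ f μ (n + 1)]
    conv_rhs => rw [pendulumIterate_succ]
    exact pendulumStep_mono hμ hf hC hCμ (hmem (n + 1)).1 (hmem (n + 1)).2 (hmem n).1
      (hmem n).2 ih

theorem pendulumIterate_periodic {P : ℝ} (hfP : Periodic f P) (n : ℕ) :
    Periodic (pendulumIterate f μ n) P := by
  induction n with
  | zero => exact fun _ => rfl
  | succ n ih => rw [pendulumIterate_succ]; exact pendulumStep_periodic hfP ih

theorem exists_fixedPoint_pendulumStep (hμ : 0 < μ) (hf : Continuous f) {P : ℝ}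
    (hfP : Periodic f P) (hC : ∀ s, |f s| ≤ C) (hCμ : C + 1 ≤ μ ^ 2) :
    ∃ q : ℝ → ℝ, AEStronglyMeasurable q ∧ (∀ t, q t ∈ Icc 0 π) ∧ Periodic q P ∧
      pendulumStep f μ q = q := by
  have hmem := pendulumIterate_mem hμ hf hC hCμ
  have hlim : ∀ t, Tendsto (pendulumIterate f μ · t) atTop (𝓝 (⨅ n, pendulumIterate f μ n t)) :=
    fun t => tendsto_atTop_ciInf
      (antitone_nat_of_succ_le fun n => pendulumIterate_succ_le hμ hf hC hCμ n t)
      ⟨0, by rintro _ ⟨n, rfl⟩; exact ((hmem n).2 t).1⟩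
  refine ⟨fun t => ⨅ n, pendulumIterate f μ n t,
    aestronglyMeasurable_of_tendsto_ae atTop (fun n => (hmem n).1) (ae_of_all _ hlim),
    fun t => isClosed_Icc.mem_of_tendsto (hlim t) (Eventually.of_forall fun n => (hmem n).2 t),
    fun t => iInf_congr fun n => pendulumIterate_periodic hfP n t,
    funext fun t => tendsto_nhds_unique ?_ ((hlim t).comp (tendsto_add_atTop_nat 1))⟩
  simp only [comp_def, pendulumIterate_succ]
  refine tendsto_greenOp hμ (fun n => (memLp_shiftedForce hf hC (hmem n).1 (hmem n).2).1)
    (fun n s => abs_shiftedForce_le hC ((hmem n).2 s)) (fun s => ?_) t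
  have hFs : Continuous (shiftedForce f μ s) := by unfold shiftedForce; fun_prop
  exact (hFs.tendsto _).comp (hlim s)

end Pendulum

/-- The horizontally forced pendulum `q̈ = f(t) sin q − cos q` with `f`
continuous, `2π`-periodic and bounded has a `2π`-periodic solution staying in
`(0, π)` for all time. -/
theorem stmt_7
    (f : ℝ → ℝ) (hf : Continuous f)
    (hper : Function.Periodic f (2 * Real.pi))
    (hbdd : ∃ C : ℝ, ∀ t, |f t| ≤ C) :
    ∃ q : ℝ → ℝ, ContDiff ℝ 2 q ∧ Function.Periodic q (2 * Real.pi) ∧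
      (∀ t, deriv (deriv q) t = f t * Real.sin (q t) - Real.cos (q t)) ∧
      (∀ t, q t ∈ Set.Ioo (0:ℝ) Real.pi) := by
  obtain ⟨C, hC⟩ := hbdd
  set μ := |C| + 1
  have hμ : 0 < μ := by positivity
  have hCμ : C + 1 ≤ μ ^ 2 := by nlinarith [le_abs_self C, abs_nonneg C]
  obtain ⟨q, hq, hqπ, hqP, hfix⟩ := exists_fixedPoint_pendulumStep hμ hf hper hC hCμ
  obtain ⟨hq2, hq''⟩ := pendulum_ode_of_pendulumStep_eq hμ hf hC hq hqπ hfix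
  refine ⟨q, hq2, hqP, hq'', fun t => ?_⟩
  have hbounds := pendulumStep_mem_Icc hμ hf hC hCμ hq hqπ t
  rw [hfix] at hbounds
  have hμ2 : 0 < 1 / μ ^ 2 := by positivity
  exact ⟨hμ2.trans_le hbounds.1, hbounds.2.trans_lt (by linarith)⟩
end

section
/- Let φ : ℝ⁺ → ℝ⁺ be continuous and positive with ∫₀^∞ s/φ(s) ds = ∞, and let u : [a,b] → ℝ be C² with |u''(t)| ≤ φ(|u'(t)|) whenever u'(t) ≠ 0, and |u(t)| ≤ M on [a,b]. Then there is a constant K, depending only on φ, M, and b − a, such that |u'(t)| ≤ K for all t ∈ [a,b]. -/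
/-!
Let `Φ x = ∫₀ˣ s / φ s ds`; the Nagumo condition says `Φ x → ∞`. By the mean value theorem
`|u' c| ≤ L := 2M/ℓ` at some `c`. If `u' t > K` for some `t > c`, let `t₁` be the last time in
`[c, t]` with `u' t₁ = L`. On `[t₁, t]` we have `u' > 0`, so `(Φ ∘ u')' = u' u'' / φ u' ≤ u'`,
and integrating gives `Φ (u' t) - Φ L ≤ u t - u t₁ ≤ 2M`, which is impossible once
`Φ K > Φ L + 2M`. The other cases follow by replacing `u` by `-u` or reversing time.
-/

open Set Filter MeasureTheory

lemma ContinuousOn.exists_eq_forall_Ioc_lt {f : ℝ → ℝ} {a b y : ℝ} (hab : a ≤ b)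
    (hf : ContinuousOn f (Icc a b)) (ha : f a ≤ y) (hb : y < f b) :
    ∃ c ∈ Ico a b, f c = y ∧ ∀ x ∈ Ioc c b, y < f x := by
  set S := Icc a b ∩ f ⁻¹' Iic y
  have hS : IsCompact S := isCompact_Icc.of_isClosed_subset
    (hf.preimage_isClosed_of_isClosed isClosed_Icc isClosed_Iic) inter_subset_left
  have hcS : sSup S ∈ S := hS.sSup_mem ⟨a, left_mem_Icc.2 hab, ha⟩
  have hlt : ∀ x ∈ Ioc (sSup S) b, y < f x := fun x hx => by
    by_contra! hxy
    exact hx.1.not_ge (le_csSup hS.bddAbove ⟨⟨hcS.1.1.trans hx.1.le, hx.2⟩, hxy⟩)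
  have hcb : sSup S < b := hcS.1.2.lt_of_ne fun h => (h ▸ hcS.2 : f b ≤ y).not_gt hb
  refine ⟨sSup S, ⟨hcS.1.1, hcb⟩, le_antisymm hcS.2 ?_, hlt⟩
  by_contra! hcy
  obtain ⟨x, hx, hfx⟩ := intermediate_value_Ioc hcb.le (hf.mono (Icc_subset_Icc_left hcS.1.1))
    ⟨hcy, hb.le⟩
  exact (hlt x hx).ne' hfx

lemma exists_abs_deriv_le_of_abs_le {u : ℝ → ℝ} {a b M : ℝ} (hab : a < b)
    (hu : ContinuousOn u (Icc a b)) (hu' : DifferentiableOn ℝ u (Ioo a b)) (ha : |u a| ≤ M)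
    (hb : |u b| ≤ M) : ∃ c ∈ Ioo a b, |deriv u c| ≤ 2 * M / (b - a) := by
  obtain ⟨c, hc, hslope⟩ := exists_deriv_eq_slope u hab hu hu'
  refine ⟨c, hc, ?_⟩
  rw [hslope, abs_div, abs_of_pos (sub_pos.2 hab)]
  gcongr
  calc |u b - u a| ≤ |u b| + |u a| := abs_sub _ _
    _ ≤ 2 * M := by linarith

/-- The integrand `s / φ s` is replaced by `0` on `(-∞, 0]`, where nothing is known about
`φ`, so that the primitive is differentiable everywhere. -/
noncomputable def nagumoPrimitive (φ : ℝ → ℝ) (x : ℝ) : ℝ :=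
  ∫ s in (0 : ℝ)..x, max s 0 / φ (max s 0)

section Nagumo

variable {φ : ℝ → ℝ}

lemma continuous_nagumoIntegrand (hφ_cont : ContinuousOn φ (Ici 0))
    (hφ_pos : ∀ s, 0 ≤ s → 0 < φ s) : Continuous fun s : ℝ => max s 0 / φ (max s 0) := by
  have hmax : Continuous fun s : ℝ => max s 0 := continuous_id.max continuous_const
  exact hmax.div (hφ_cont.comp_continuous hmax fun s => le_max_right s 0)
    fun s => (hφ_pos _ (le_max_right s 0)).ne'

lemma hasDerivAt_nagumoPrimitive (hφ_cont : ContinuousOn φ (Ici 0))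
    (hφ_pos : ∀ s, 0 ≤ s → 0 < φ s) (x : ℝ) :
    HasDerivAt (nagumoPrimitive φ) (max x 0 / φ (max x 0)) x :=
  ((continuous_nagumoIntegrand hφ_cont hφ_pos).integral_hasStrictDerivAt 0 x).hasDerivAt

lemma monotone_nagumoPrimitive (hφ_cont : ContinuousOn φ (Ici 0))
    (hφ_pos : ∀ s, 0 ≤ s → 0 < φ s) : Monotone (nagumoPrimitive φ) :=
  monotone_of_hasDerivAt_nonneg (hasDerivAt_nagumoPrimitive hφ_cont hφ_pos) fun x =>
    div_nonneg (le_max_right x 0) (hφ_pos _ (le_max_right x 0)).le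

lemma tendsto_nagumoPrimitive_atTop (hφ_cont : ContinuousOn φ (Ici 0))
    (hφ_pos : ∀ s, 0 ≤ s → 0 < φ s)
    (hNagumo : ¬ IntegrableOn (fun s => s / φ s) (Ioi 0)) :
    Tendsto (nagumoPrimitive φ) atTop atTop := by
  refine tendsto_atTop_atTop_of_monotone' (monotone_nagumoPrimitive hφ_cont hφ_pos) ?_
  rintro ⟨C, hC⟩
  have hg := continuous_nagumoIntegrand hφ_cont hφ_pos
  have hnorm : ∀ s : ℝ, ‖max s 0 / φ (max s 0)‖ = max s 0 / φ (max s 0) := fun s =>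
    Real.norm_of_nonneg (div_nonneg (le_max_right s 0) (hφ_pos _ (le_max_right s 0)).le)
  have hint : IntegrableOn (fun s : ℝ => max s 0 / φ (max s 0)) (Ioi 0) :=
    integrableOn_Ioi_of_intervalIntegral_norm_bounded C 0 (fun _ => hg.integrableOn_Ioc)
      tendsto_id (Eventually.of_forall fun x => by
        simpa only [id, hnorm, nagumoPrimitive] using hC (mem_range_self x))
  exact hNagumo (hint.congr_fun (fun s (hs : 0 < s) => by simp [hs.le]) measurableSet_Ioi)

lemma nagumoPrimitive_sub_le_sub (hφ_cont : ContinuousOn φ (Ici 0))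
    (hφ_pos : ∀ s, 0 ≤ s → 0 < φ s) {u v v' : ℝ → ℝ} {t₁ t₂ : ℝ} (h₁₂ : t₁ ≤ t₂)
    (hu : ContinuousOn u (Icc t₁ t₂)) (hv : ContinuousOn v (Icc t₁ t₂))
    (hu' : ∀ t ∈ Ioo t₁ t₂, HasDerivAt u (v t) t) (hv' : ∀ t ∈ Ioo t₁ t₂, HasDerivAt v (v' t) t)
    (hpos : ∀ t ∈ Ioo t₁ t₂, 0 < v t) (hbd : ∀ t ∈ Ioo t₁ t₂, v' t ≤ φ (v t)) :
    nagumoPrimitive φ (v t₂) - nagumoPrimitive φ (v t₁) ≤ u t₂ - u t₁ := by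
  have hΦ := hasDerivAt_nagumoPrimitive hφ_cont hφ_pos
  have hΦcont : Continuous (nagumoPrimitive φ) :=
    continuous_iff_continuousAt.2 fun x => (hΦ x).continuousAt
  have hmono : MonotoneOn (fun t => u t - nagumoPrimitive φ (v t)) (Icc t₁ t₂) := by
    refine monotoneOn_of_hasDerivWithinAt_nonneg (convex_Icc t₁ t₂)
      (f' := fun t => v t - max (v t) 0 / φ (max (v t) 0) * v' t)
      (hu.sub (hΦcont.comp_continuousOn hv)) (fun t ht => ?_) fun t ht => ?_
    · rw [interior_Icc] at ht
      exact (((hu' t ht).sub ((hΦ (v t)).comp t (hv' t ht))).hasDerivWithinAt)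
    · rw [interior_Icc] at ht
      have hφv : 0 < φ (v t) := hφ_pos _ (hpos t ht).le
      rw [max_eq_left (hpos t ht).le, sub_nonneg, div_mul_eq_mul_div, div_le_iff₀ hφv]
      exact mul_le_mul_of_nonneg_left (hbd t ht) (hpos t ht).le
  have := hmono (left_mem_Icc.2 h₁₂) (right_mem_Icc.2 h₁₂) h₁₂
  simp only at this
  linarith

lemma nagumo_forward_le (hφ_cont : ContinuousOn φ (Ici 0)) (hφ_pos : ∀ s, 0 ≤ s → 0 < φ s)
    {u v v' : ℝ → ℝ} {M L K c t : ℝ} (hK : nagumoPrimitive φ L + 2 * M < nagumoPrimitive φ K)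
    (hLK : L ≤ K) (hct : c ≤ t) (hu : ∀ s, HasDerivAt u (v s) s)
    (hv : ∀ s, HasDerivAt v (v' s) s) (hbd : ∀ s ∈ Icc c t, 0 < v s → v' s ≤ φ (v s))
    (hM : ∀ s ∈ Icc c t, |u s| ≤ M) (hc : |v c| ≤ L) : v t ≤ K := by
  by_contra! hKt
  have hucont : Continuous u := continuous_iff_continuousAt.2 fun s => (hu s).continuousAt
  have hvcont : Continuous v := continuous_iff_continuousAt.2 fun s => (hv s).continuousAt
  obtain ⟨t₁, ht₁, hvt₁, hLv⟩ :=
    hvcont.continuousOn.exists_eq_forall_Ioc_lt hct (le_of_abs_le hc) (hLK.trans_lt hKt)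
  have hpos : ∀ s ∈ Ioo t₁ t, 0 < v s := fun s hs =>
    ((abs_nonneg _).trans hc).trans_lt (hLv s (Ioo_subset_Ioc_self hs))
  have hsub : Icc t₁ t ⊆ Icc c t := Icc_subset_Icc_left ht₁.1
  have hgrowth := nagumoPrimitive_sub_le_sub hφ_cont hφ_pos ht₁.2.le hucont.continuousOn
    hvcont.continuousOn (fun s _ => hu s) (fun s _ => hv s) hpos
    fun s hs => hbd s (hsub (Ioo_subset_Icc_self hs)) (hpos s hs)
  have hΦK := monotone_nagumoPrimitive hφ_cont hφ_pos hKt.le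
  have hut := abs_le.1 (hM t (right_mem_Icc.2 hct))
  have hut₁ := abs_le.1 (hM t₁ (hsub (left_mem_Icc.2 ht₁.2.le)))
  rw [hvt₁] at hgrowth
  linarith

lemma nagumo_forward_abs_le (hφ_cont : ContinuousOn φ (Ici 0))
    (hφ_pos : ∀ s, 0 ≤ s → 0 < φ s) {u v v' : ℝ → ℝ} {M L K c t : ℝ}
    (hK : nagumoPrimitive φ L + 2 * M < nagumoPrimitive φ K) (hLK : L ≤ K) (hct : c ≤ t)
    (hu : ∀ s, HasDerivAt u (v s) s) (hv : ∀ s, HasDerivAt v (v' s) s)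
    (hbd : ∀ s ∈ Icc c t, v s ≠ 0 → |v' s| ≤ φ |v s|) (hM : ∀ s ∈ Icc c t, |u s| ≤ M)
    (hc : |v c| ≤ L) : |v t| ≤ K := by
  refine abs_le.2 ⟨neg_le.1 ?_, ?_⟩
  · refine nagumo_forward_le hφ_cont hφ_pos (u := -u) (v := -v) (v' := -v') hK hLK hct
      (fun s => (hu s).neg) (fun s => (hv s).neg) (fun s hs hpos => ?_)
      (fun s hs => by simpa using hM s hs) (by simpa using hc)
    have hvs : |v s| = -v s := abs_of_neg (neg_pos.1 hpos)
    exact (neg_le_abs _).trans ((hbd s hs (neg_pos.1 hpos).ne).trans_eq (by rw [hvs]; rfl))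
  · refine nagumo_forward_le hφ_cont hφ_pos hK hLK hct hu hv (fun s hs hpos => ?_) hM hc
    exact (le_abs_self _).trans ((hbd s hs hpos.ne').trans_eq (by rw [abs_of_pos hpos]))

lemma nagumo_abs_le (hφ_cont : ContinuousOn φ (Ici 0))
    (hφ_pos : ∀ s, 0 ≤ s → 0 < φ s) {u v v' : ℝ → ℝ} {M L K c t : ℝ}
    (hK : nagumoPrimitive φ L + 2 * M < nagumoPrimitive φ K) (hLK : L ≤ K)
    (hu : ∀ s, HasDerivAt u (v s) s) (hv : ∀ s, HasDerivAt v (v' s) s)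
    (hbd : ∀ s ∈ uIcc c t, v s ≠ 0 → |v' s| ≤ φ |v s|) (hM : ∀ s ∈ uIcc c t, |u s| ≤ M)
    (hc : |v c| ≤ L) : |v t| ≤ K := by
  rcases le_total c t with hct | htc
  · rw [uIcc_of_le hct] at hbd hM
    exact nagumo_forward_abs_le hφ_cont hφ_pos hK hLK hct hu hv hbd hM hc
  · rw [uIcc_of_ge htc] at hbd hM
    have hneg : ∀ s ∈ Icc (-c) (-t), -s ∈ Icc t c := fun s hs =>
      ⟨le_neg_of_le_neg hs.2, neg_le.1 hs.1⟩
    simpa using nagumo_forward_abs_le hφ_cont hφ_pos (u := fun s => u (-s))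
      (v := fun s => -v (-s)) (v' := fun s => v' (-s)) hK hLK (neg_le_neg htc)
      (fun s => by simpa [Function.comp_def] using (hu (-s)).comp s (hasDerivAt_neg s))
      (fun s => by
        simpa [Function.comp_def] using ((hv (-s)).comp s (hasDerivAt_neg s)).fun_neg)
      (fun s hs hvs => by simpa using hbd (-s) (hneg s hs) (by simpa using hvs))
      (fun s hs => hM (-s) (hneg s hs)) (by simpa using hc)

end Nagumo

theorem stmt_13_general
    (φ : ℝ → ℝ) (hφ_cont : ContinuousOn φ (Set.Ici 0))
    (hφ_pos : ∀ s, 0 ≤ s → 0 < φ s)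
    (hNagumo : ¬ MeasureTheory.IntegrableOn (fun s => s / φ s) (Set.Ioi 0))
    (M : ℝ) (ℓ : ℝ) :
    ∃ K : ℝ, ∀ a b : ℝ, a < b → b - a = ℓ →
      ∀ u : ℝ → ℝ, ContDiff ℝ 2 u →
        (∀ t ∈ Set.Icc a b, deriv u t ≠ 0 → |deriv (deriv u) t| ≤ φ |deriv u t|) →
        (∀ t ∈ Set.Icc a b, |u t| ≤ M) →
        ∀ t ∈ Set.Icc a b, |deriv u t| ≤ K := by
  have hΦ := tendsto_nagumoPrimitive_atTop hφ_cont hφ_pos hNagumo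
  obtain ⟨K, hK, hLK⟩ := ((hΦ.eventually_gt_atTop (nagumoPrimitive φ (2 * M / ℓ) + 2 * M)).and
    (eventually_ge_atTop (2 * M / ℓ))).exists
  refine ⟨K, fun a b hab hℓ u hu hbd hM t ht => ?_⟩
  have hu' : Differentiable ℝ u := hu.differentiable (by norm_num)
  have hu'' : Differentiable ℝ (deriv u) := by
    simpa using hu.differentiable_iteratedDeriv 1 (by norm_num)
  obtain ⟨c, hc, hvc⟩ := exists_abs_deriv_le_of_abs_le hab hu'.continuous.continuousOn
    hu'.differentiableOn (hM a (left_mem_Icc.2 hab.le)) (hM b (right_mem_Icc.2 hab.le))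
  rw [hℓ] at hvc
  have hsub : uIcc c t ⊆ Icc a b := uIcc_subset_Icc (Ioo_subset_Icc_self hc) ht
  exact nagumo_abs_le hφ_cont hφ_pos hK hLK (fun s => (hu' s).hasDerivAt)
    (fun s => (hu'' s).hasDerivAt) (fun s hs => hbd s (hsub hs)) (fun s hs => hM s (hsub hs)) hvc

/-- Nagumo a priori gradient bound: if `φ` is continuous and positive on
`(0,∞)` with `∫₀^∞ s/φ(s) ds = ∞` (formalized as non-integrability of the
positive integrand on `(0,∞)`), then there is `K = K(φ, M, b−a)` bounding
`|u'|` for every `C²` function `u` on an interval of length `b − a` with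
`|u| ≤ M` and `|u''| ≤ φ(|u'|)`. -/
theorem stmt_13
    (φ : ℝ → ℝ) (hφ_cont : ContinuousOn φ (Set.Ici 0))
    (hφ_pos : ∀ s, 0 ≤ s → 0 < φ s)
    (hNagumo : ¬ MeasureTheory.IntegrableOn (fun s => s / φ s) (Set.Ioi 0))
    (M : ℝ) (hM : 0 ≤ M) (ℓ : ℝ) (hℓ : 0 < ℓ) :
    ∃ K : ℝ, ∀ a b : ℝ, a < b → b - a = ℓ →
      ∀ u : ℝ → ℝ, ContDiff ℝ 2 u →
        (∀ t ∈ Set.Icc a b, deriv u t ≠ 0 → |deriv (deriv u) t| ≤ φ |deriv u t|) →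
        (∀ t ∈ Set.Icc a b, |u t| ≤ M) →
        ∀ t ∈ Set.Icc a b, |deriv u t| ≤ K :=
  stmt_13_general φ hφ_cont hφ_pos hNagumo M ℓ
end
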